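/- arXiv:2506.01717 — 7 statements merged into one kernel-verified Lean document; each statement's English description precedes it below -/
import Mathlib

section
/- In the simplex category Δ, the pushout of a span [n] ↞ [m] ↪ [k], where the left leg is an epimorphism (surjective monotone map) and the right leg is a monomorphism (injective monotone map), exists, and the map induced by the monomorphism leg into the pushout is again a monomorphism. -/
open CategoryTheory SimplexCategory

namespace SimplexPushoutAux

variable {m n k : ℕ} (E : Fin (m+1) →o Fin (n+1)) (F : Fin (m+1) →o Fin (k+1))

/-- The step `j → j+1` of `[k]` gets collapsed in the pushout. -/
def Col (j : ℕ) : Prop :=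
  ∃ a b : Fin (m+1), E a = E b ∧ (F a : ℕ) ≤ j ∧ j + 1 ≤ (F b : ℕ)

instance : DecidablePred (Col E F) := fun j => by unfold Col; infer_instance

/-- number of collapsed steps below `x` -/
def C (x : ℕ) : ℕ := ((Finset.range x).filter (Col E F)).card

lemma C_zero : C E F 0 = 0 := by simp [C]

lemma C_succ (x : ℕ) : C E F (x+1) = C E F x + (if Col E F x then 1 else 0) := by
  rw [C, Finset.range_add_one, Finset.filter_insert]
  split
  · rw [Finset.card_insert_of_notMem (by simp)]; rfl
  · simp [C]

lemma C_le (x : ℕ) : C E F x ≤ x := by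
  induction x with
  | zero => simp [C_zero]
  | succ x ih => rw [C_succ]; split <;> omega

/-- the quotient map on values -/
def Q (x : ℕ) : ℕ := x - C E F x

lemma Q_zero : Q E F 0 = 0 := by simp [Q, C_zero]

lemma Q_succ_col {x : ℕ} (h : Col E F x) : Q E F (x+1) = Q E F x := by
  have := C_le E F x
  simp only [Q, C_succ, if_pos h]; omega

lemma Q_succ_not {x : ℕ} (h : ¬ Col E F x) : Q E F (x+1) = Q E F x + 1 := by
  have := C_le E F x
  simp only [Q, C_succ, if_neg h]; omega

lemma Q_succ_le (x : ℕ) : Q E F (x+1) ≤ Q E F x + 1 := by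
  by_cases h : Col E F x
  · rw [Q_succ_col E F h]; omega
  · rw [Q_succ_not E F h]

lemma Q_succ_ge (x : ℕ) : Q E F x ≤ Q E F (x+1) := by
  by_cases h : Col E F x
  · rw [Q_succ_col E F h]
  · rw [Q_succ_not E F h]; omega

lemma Q_mono : Monotone (Q E F) := by
  apply monotone_nat_of_le_succ
  exact Q_succ_ge E F

lemma col_of_Q_eq {x y j : ℕ} (h : Q E F x = Q E F y) (h1 : x ≤ j) (h2 : j + 1 ≤ y) :
    Col E F j := by
  by_contra hc
  have h3 := Q_succ_not E F hc
  have h4 := Q_mono E F h1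
  have h5 := Q_mono E F h2
  omega

lemma Q_eq_of_forall_col {x y : ℕ} (hxy : x ≤ y)
    (h : ∀ j, x ≤ j → j + 1 ≤ y → Col E F j) : Q E F x = Q E F y := by
  induction y, hxy using Nat.le_induction with
  | base => rfl
  | succ y hy ih =>
    rw [Q_succ_col E F (h y hy (le_refl _)), ih (fun j h1 h2 => h j h1 (by omega))]

lemma exists_Q_eq {y z : ℕ} (hz : z ≤ Q E F y) : ∃ x ≤ y, Q E F x = z := by
  induction y with
  | zero => exact ⟨0, le_refl _, by rw [Q_zero] at hz ⊢; omega⟩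
  | succ y ih =>
    by_cases h : z ≤ Q E F y
    · obtain ⟨x, hx, hx'⟩ := ih h
      exact ⟨x, by omega, hx'⟩
    · have h1 := Q_succ_le E F y
      have h2 := Q_succ_ge E F y
      exact ⟨y + 1, le_refl _, by omega⟩

end SimplexPushoutAux

open SimplexPushoutAux

/-- In the simplex category `Δ`, the pushout of a span `[n] ↞ [m] ↪ [k]` with an
epimorphism as left leg and a monomorphism as right leg exists, and the induced map
from `[n]` into the pushout (the cobase change of the monomorphism leg) is again a
monomorphism. -/
theorem simplexCategory_pushout_epi_mono_exists_and_mono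
    (m n k : ℕ) (e : SimplexCategory.mk m ⟶ SimplexCategory.mk n)
    (f : SimplexCategory.mk m ⟶ SimplexCategory.mk k)
    (he : Epi e) (hf : Mono f) :
    ∃ (P : SimplexCategory) (inl : SimplexCategory.mk n ⟶ P)
      (inr : SimplexCategory.mk k ⟶ P),
      IsPushout e f inl inr ∧ Mono inl := by
  set E : Fin (m+1) →o Fin (n+1) := e.toOrderHom with hEdef
  set F : Fin (m+1) →o Fin (k+1) := f.toOrderHom with hFdef
  have hE : Function.Surjective E := SimplexCategory.epi_iff_surjective.1 he
  have hF : Function.Injective F := SimplexCategory.mono_iff_injective.1 hf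
  have hFs : StrictMono F := F.monotone.strictMono_of_injective hF
  -- key lemma A : Q is constant on images of fibers of E
  have lemA : ∀ a b : Fin (m+1), E a = E b → Q E F (F a) = Q E F (F b) := by
    have key : ∀ a b : Fin (m+1), a ≤ b → E a = E b → Q E F (F a) = Q E F (F b) := by
      intro a b hab heq
      refine Q_eq_of_forall_col E F (by exact_mod_cast F.monotone hab) ?_
      intro j h1 h2
      exact ⟨a, b, heq, h1, h2⟩
    intro a b heq
    rcases le_total a b with h | h
    · exact key a b h heq
    · exact (key b a h heq.symm).symm
  -- the quotient map on Fin level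
  have hQk : ∀ x : Fin (k+1), Q E F x ≤ Q E F k := fun x => Q_mono E F x.is_le
  set qO : Fin (k+1) →o Fin (Q E F k + 1) :=
    ⟨fun x => ⟨Q E F x, Nat.lt_succ_of_le (hQk x)⟩,
     fun x y h => by simpa [Fin.le_def] using Q_mono E F (show (x:ℕ) ≤ y from h)⟩
    with hqOdef
  have hqO_val : ∀ x : Fin (k+1), (qO x : ℕ) = Q E F x := fun _ => rfl
  -- section of E
  set s : Fin (n+1) → Fin (m+1) := Function.surjInv hE with hsdef
  have hs : ∀ c, E (s c) = c := fun c => Function.surjInv_eq hE c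
  have hs_lt : ∀ {c c' : Fin (n+1)}, c < c' → s c < s c' := by
    intro c c' h
    by_contra hc
    push_neg at hc
    have := E.monotone hc
    rw [hs, hs] at this
    exact absurd (lt_of_lt_of_le h this) (lt_irrefl _)
  -- the map inl
  set inlO : Fin (n+1) →o Fin (Q E F k + 1) :=
    ⟨fun c => qO (F (s c)),
     fun c c' h => by
       rcases eq_or_lt_of_le h with rfl | h
       · exact le_refl _
       · exact qO.monotone (F.monotone (le_of_lt (hs_lt h)))⟩
    with hinlOdef
  refine ⟨SimplexCategory.mk (Q E F k),
    SimplexCategory.mkHom inlO,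
    SimplexCategory.mkHom qO, ?_, ?_⟩
  · -- IsPushout
    have hcomm : e ≫ SimplexCategory.mkHom inlO = f ≫ SimplexCategory.mkHom qO := by
      apply SimplexCategory.Hom.ext
      ext x
      simp only [SimplexCategory.comp_toOrderHom, OrderHom.comp_coe, Function.comp_apply,
        SimplexCategory.Hom.toOrderHom_mk]
      show ((inlO (E x) : Fin _) : ℕ) = ((qO (F x) : Fin _) : ℕ)
      simp only [hinlOdef, hqO_val, OrderHom.coe_mk]
      exact lemA _ _ (hs (E x))
    -- constancy of cocone legs on fibers of qO
    have lemB : ∀ {X : SimplexCategory} (G : SimplexCategory.mk n ⟶ X)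
        (H : SimplexCategory.mk k ⟶ X), e ≫ G = f ≫ H →
        ∀ x y : Fin (k+1), Q E F x = Q E F y →
          H.toOrderHom x = H.toOrderHom y := by
      intro X G H hGH
      have hGH' : ∀ a : Fin (m+1), G.toOrderHom (E a) = H.toOrderHom (F a) := by
        intro a
        have := congrArg (fun φ => φ.toOrderHom a) hGH
        simpa using this
      have key : ∀ d : ℕ, ∀ x y : Fin (k+1), (x : ℕ) + d = y → Q E F x = Q E F y →
          H.toOrderHom x = H.toOrderHom y := by
        intro d
        induction d with
        | zero =>
          intro x y hxy _
          have : x = y := Fin.ext (by omega)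
          rw [this]
        | succ d ih =>
          intro x y hxy hQ
          have hxk : (x : ℕ) + 1 ≤ k := by have := y.is_le; omega
          set x' : Fin (k+1) := ⟨(x : ℕ) + 1, by omega⟩ with hx'def
          have hcol : Col E F x := col_of_Q_eq E F hQ (le_refl _) (by omega)
          obtain ⟨a, b, hab, ha, hb⟩ := hcol
          have h1 : H.toOrderHom (F a) = H.toOrderHom (F b) := by
            rw [← hGH' a, ← hGH' b, hab]
          have h2 : H.toOrderHom (F a) ≤ H.toOrderHom x :=
            H.toOrderHom.monotone (by exact_mod_cast ha)
          have h3 : H.toOrderHom x ≤ H.toOrderHom x' :=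
            H.toOrderHom.monotone (by simp [hx'def, Fin.le_def])
          have h4 : H.toOrderHom x' ≤ H.toOrderHom (F b) :=
            H.toOrderHom.monotone (by simp [hx'def, Fin.le_def]; omega)
          have hxx' : H.toOrderHom x = H.toOrderHom x' := by
            have h5 : H.toOrderHom (F b) ≤ H.toOrderHom (F a) := le_of_eq h1.symm
            exact le_antisymm h3 (h4.trans (h5.trans h2))
          have hQ' : Q E F x' = Q E F y := by
            have e1 : Q E F x ≤ Q E F x' := Q_mono E F (by simp [hx'def])
            have e2 : Q E F x' ≤ Q E F y := Q_mono E F (by simp [hx'def]; omega)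
            omega
          rw [hxx']
          exact ih x' y (by simp [hx'def]; omega) hQ'
      intro x y hQ
      rcases le_total (x : ℕ) (y : ℕ) with h | h
      · exact key (y - x) x y (by omega) hQ
      · exact (key (x - y) y x (by omega) hQ.symm).symm
    -- surjectivity of qO
    have hq_surj : Function.Surjective qO := by
      intro z
      obtain ⟨x, hx, hx'⟩ := exists_Q_eq E F (show (z : ℕ) ≤ Q E F k from Nat.lt_succ_iff.1 z.isLt)
      exact ⟨⟨x, by omega⟩, Fin.ext hx'⟩
    set sq : Fin (Q E F k + 1) → Fin (k + 1) := Function.surjInv hq_surj with hsqdef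
    have hsq : ∀ z, qO (sq z) = z := fun z => Function.surjInv_eq hq_surj z
    have hsqQ : ∀ z, Q E F (sq z) = (z : ℕ) := fun z => congrArg Fin.val (hsq z)
    apply IsPushout.of_isColimit' ⟨hcomm⟩
    refine Limits.PushoutCocone.IsColimit.mk _ ?_ ?_ ?_ ?_
    · -- desc
      intro c
      refine SimplexCategory.Hom.mk ⟨fun z => c.inr.toOrderHom (sq z), ?_⟩
      intro z z' hz
      rcases le_total (sq z) (sq z') with h | h
      · exact c.inr.toOrderHom.monotone h
      · have : (z' : Fin _) ≤ z := by rw [← hsq z, ← hsq z']; exact qO.monotone h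
        have hzz' : z = z' := le_antisymm hz this
        subst hzz'
        exact le_refl _
    · -- fac_left
      intro c
      apply SimplexCategory.Hom.ext
      apply OrderHom.ext
      funext x
      show c.inr.toOrderHom (sq (inlO x)) = c.inl.toOrderHom x
      have step1 : c.inr.toOrderHom (sq (inlO x)) = c.inr.toOrderHom (F (s x)) := by
        apply lemB c.inl c.inr c.condition
        rw [hsqQ (inlO x)]
        exact (hqO_val (F (s x))).symm
      rw [step1]
      have h6 := congrArg (fun φ => φ.toOrderHom (s x)) c.condition
      simp only [SimplexCategory.comp_toOrderHom, OrderHom.comp_coe, Function.comp_apply] at h6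
      have h7 : c.inl.toOrderHom (E (s x)) = c.inl.toOrderHom x := by rw [hs]
      rw [← h7]
      exact h6.symm
    · -- fac_right
      intro c
      apply SimplexCategory.Hom.ext
      apply OrderHom.ext
      funext x
      show c.inr.toOrderHom (sq (qO x)) = c.inr.toOrderHom x
      apply lemB c.inl c.inr c.condition
      rw [hsqQ (qO x)]
      exact hqO_val x
    · -- uniq
      intro c u' h1 h2
      apply SimplexCategory.Hom.ext
      apply OrderHom.ext
      funext z
      have h3 := congrArg (fun φ => φ.toOrderHom (sq z)) h2
      simp only [SimplexCategory.comp_toOrderHom, OrderHom.comp_coe, Function.comp_apply] at h3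
      show u'.toOrderHom z = c.inr.toOrderHom (sq z)
      have h4 : u'.toOrderHom z = u'.toOrderHom (qO (sq z)) := by rw [hsq z]
      rw [h4]
      exact h3
  · -- Mono inl
    rw [SimplexCategory.mono_iff_injective]
    have hstrict : StrictMono inlO := by
      intro c c' hcc
      -- the max of the fiber of c
      have hne : ((Finset.univ.filter (fun a => E a = c)) : Finset (Fin (m+1))).Nonempty := by
        obtain ⟨a, ha⟩ := hE c
        exact ⟨a, by simp [ha]⟩
      set tc : Fin (m+1) := Finset.max' _ hne with htcdef
      have htc_mem : E tc = c := by
        have := Finset.max'_mem _ hne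
        simpa using this
      have htc_max : ∀ b : Fin (m+1), E b = c → b ≤ tc := by
        intro b hb
        exact Finset.le_max' _ b (by simp [hb])
      have h_sc_tc : s c ≤ tc := htc_max _ (hs c)
      have h_tc_sc' : tc < s c' := by
        by_contra hcon
        push_neg at hcon
        have := E.monotone hcon
        rw [hs] at this
        rw [htc_mem] at this
        exact absurd (lt_of_le_of_lt this hcc) (lt_irrefl _)
      -- the step at F tc is not collapsed
      have hnotcol : ¬ Col E F (F tc) := by
        rintro ⟨a, b, hab, ha, hb⟩
        have hatc : a ≤ tc := by
          by_contra hcon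
          push_neg at hcon
          have := hFs hcon
          rw [Fin.lt_def] at this
          omega
        have htcb : tc < b := by
          by_contra hcon
          push_neg at hcon
          have := F.monotone hcon
          rw [Fin.le_def] at this
          omega
        have h5 : E b = c := by
          have e1 : E a ≤ E tc := E.monotone hatc
          have e2 : E tc ≤ E b := E.monotone (le_of_lt htcb)
          rw [hab] at e1
          rw [← htc_mem]
          exact le_antisymm (le_antisymm e2 e1 ▸ le_refl _) e2
        exact absurd (htc_max b h5) (not_le.2 htcb)
      -- conclude
      have e1 : Q E F (F (s c)) ≤ Q E F (F tc) :=
        Q_mono E F (by exact_mod_cast F.monotone h_sc_tc)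
      have e2 : Q E F ((F tc : ℕ) + 1) = Q E F (F tc) + 1 := Q_succ_not E F hnotcol
      have e3 : Q E F ((F tc : ℕ) + 1) ≤ Q E F (F (s c')) := by
        apply Q_mono E F
        have := hFs h_tc_sc'
        rw [Fin.lt_def] at this
        omega
      show (inlO c : Fin _) < inlO c'
      rw [Fin.lt_def]
      show Q E F (F (s c)) < Q E F (F (s c'))
      omega
    exact fun a b hab => hstrict.injective (by exact hab)
end

section
/- In the simplex category Δ, the pullback of a cospan [n] ↪ [n'] ↞ [m'], where the bottom map is a monomorphism and the right map is an epimorphism, exists, and the projection of the pullback to [n] is again an epimorphism. -/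
open CategoryTheory SimplexCategory
open CategoryTheory.Limits

/-- In the simplex category `Δ`, the pullback of a cospan `[n] ↪ [n'] ↞ [m']` with a
monomorphism at the bottom and an epimorphism on the right exists, and the projection
of the pullback to `[n]` is again an epimorphism. -/
theorem simplexCategory_pullback_mono_epi_exists_and_epi
    (n n' m' : ℕ) (d : SimplexCategory.mk n ⟶ SimplexCategory.mk n')
    (κ : SimplexCategory.mk m' ⟶ SimplexCategory.mk n')
    (hd : Mono d) (hκ : Epi κ) :
    ∃ (P : SimplexCategory) (p₁ : P ⟶ SimplexCategory.mk n)
      (p₂ : P ⟶ SimplexCategory.mk m'),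
      IsPullback p₁ p₂ d κ ∧ Epi p₁ := by
  classical
  have hdinj : Function.Injective d.toOrderHom := mono_iff_injective.mp hd
  have hκsurj : Function.Surjective κ.toOrderHom := epi_iff_surjective.mp hκ
  have hdsm : StrictMono d.toOrderHom := d.toOrderHom.monotone.strictMono_of_injective hdinj
  -- a partial inverse of `d` composed with `κ`
  set r : Fin (m' + 1) → Fin ((SimplexCategory.mk n).len + 1) := fun y =>
    if h : ∃ x, d.toOrderHom x = κ.toOrderHom y then h.choose else 0 with hrdef
  have hr : ∀ y, κ.toOrderHom y ∈ Set.range d.toOrderHom →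
      d.toOrderHom (r y) = κ.toOrderHom y := by
    intro y hy
    obtain ⟨x, hx⟩ := hy
    have hex : ∃ x, d.toOrderHom x = κ.toOrderHom y := ⟨x, hx⟩
    simp only [hrdef, dif_pos hex]
    exact hex.choose_spec
  set S : Finset (Fin (m' + 1)) :=
    Finset.univ.filter (fun y => κ.toOrderHom y ∈ Set.range d.toOrderHom) with hS
  have hmemS : ∀ y, y ∈ S ↔ κ.toOrderHom y ∈ Set.range d.toOrderHom := by
    intro y; simp [hS]
  have hSne : S.Nonempty := by
    obtain ⟨y, hy⟩ := hκsurj (d.toOrderHom 0)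
    exact ⟨y, (hmemS y).mpr ⟨0, hy.symm⟩⟩
  have hk : 0 < S.card := Finset.card_pos.mpr hSne
  have hcard : S.card = (S.card - 1) + 1 := (Nat.succ_pred_eq_of_pos hk).symm
  set e : Fin (S.card - 1 + 1) ≃o S := S.orderIsoOfFin hcard with he
  -- second projection
  set p₂ : SimplexCategory.mk (S.card - 1) ⟶ SimplexCategory.mk m' :=
    SimplexCategory.Hom.mk
      ⟨fun x => (e x : Fin (m' + 1)), fun a b hab => Subtype.coe_le_coe.mpr (e.monotone hab)⟩
    with hp₂
  have hp₂_apply : ∀ x, p₂.toOrderHom x = (e x : Fin (m' + 1)) := fun _ => rfl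
  have hp₂mem : ∀ x, κ.toOrderHom (p₂.toOrderHom x) ∈ Set.range d.toOrderHom := by
    intro x
    exact (hmemS _).mp (e x).2
  have hdr : ∀ x, d.toOrderHom (r (p₂.toOrderHom x)) = κ.toOrderHom (p₂.toOrderHom x) :=
    fun x => hr _ (hp₂mem x)
  -- first projection
  set p₁ : SimplexCategory.mk (S.card - 1) ⟶ SimplexCategory.mk n :=
    SimplexCategory.Hom.mk
      ⟨fun x => r (p₂.toOrderHom x), by
        intro a b hab
        rw [← hdsm.le_iff_le, hdr, hdr]
        exact κ.toOrderHom.monotone (p₂.toOrderHom.monotone hab)⟩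
    with hp₁
  have hp₁_apply : ∀ x, p₁.toOrderHom x = r (p₂.toOrderHom x) := fun _ => rfl
  have comm : p₁ ≫ d = p₂ ≫ κ := by
    apply SimplexCategory.Hom.ext
    rw [SimplexCategory.comp_toOrderHom, SimplexCategory.comp_toOrderHom]
    apply OrderHom.ext
    funext x
    exact hdr x
  have key : ∀ (W : SimplexCategory) (f : W ⟶ SimplexCategory.mk n)
      (g : W ⟶ SimplexCategory.mk m'), f ≫ d = g ≫ κ →
      ∀ w, g.toOrderHom w ∈ S := by
    intro W f g hfg w
    have : d.toOrderHom (f.toOrderHom w) = κ.toOrderHom (g.toOrderHom w) := by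
      have := congrArg (fun h => SimplexCategory.Hom.toOrderHom h w) hfg
      simpa [SimplexCategory.comp_toOrderHom] using this
    exact (hmemS _).mpr ⟨f.toOrderHom w, this⟩
  -- the lift construction
  have liftdef : ∀ (W : SimplexCategory) (f : W ⟶ SimplexCategory.mk n)
      (g : W ⟶ SimplexCategory.mk m') (hfg : f ≫ d = g ≫ κ),
      ∃ l : W ⟶ SimplexCategory.mk (S.card - 1), l ≫ p₁ = f ∧ l ≫ p₂ = g := by
    intro W f g hfg
    have hcond : ∀ w, d.toOrderHom (f.toOrderHom w) = κ.toOrderHom (g.toOrderHom w) := by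
      intro w
      have := congrArg (fun h => SimplexCategory.Hom.toOrderHom h w) hfg
      simpa [SimplexCategory.comp_toOrderHom] using this
    refine ⟨SimplexCategory.Hom.mk
      ⟨fun w => e.symm ⟨g.toOrderHom w, key W f g hfg w⟩, fun a b hab =>
        e.symm.monotone (Subtype.mk_le_mk.mpr (g.toOrderHom.monotone hab))⟩, ?_, ?_⟩
    · apply SimplexCategory.Hom.ext
      rw [SimplexCategory.comp_toOrderHom]
      apply OrderHom.ext
      funext w
      show p₁.toOrderHom (e.symm ⟨g.toOrderHom w, _⟩) = f.toOrderHom w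
      rw [hp₁_apply]
      have h2 : p₂.toOrderHom (e.symm ⟨g.toOrderHom w, key W f g hfg w⟩) = g.toOrderHom w := by
        rw [hp₂_apply, OrderIso.apply_symm_apply]
      apply hdinj
      rw [hr _ (by rw [h2]; exact (hmemS _).mp (key W f g hfg w)), h2, hcond w]
    · apply SimplexCategory.Hom.ext
      rw [SimplexCategory.comp_toOrderHom]
      apply OrderHom.ext
      funext w
      show p₂.toOrderHom (e.symm ⟨g.toOrderHom w, _⟩) = g.toOrderHom w
      rw [hp₂_apply, OrderIso.apply_symm_apply]
  have hp₂inj : Function.Injective p₂.toOrderHom := by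
    intro a b hab
    rw [hp₂_apply, hp₂_apply] at hab
    exact e.injective (Subtype.ext hab)
  refine ⟨SimplexCategory.mk (S.card - 1), p₁, p₂, ?_, ?_⟩
  · refine IsPullback.of_isLimit' ⟨comm⟩ ?_
    refine PullbackCone.IsLimit.mk comm
      (fun s => (liftdef s.pt s.fst s.snd s.condition).choose)
      (fun s => (liftdef s.pt s.fst s.snd s.condition).choose_spec.1)
      (fun s => (liftdef s.pt s.fst s.snd s.condition).choose_spec.2)
      (fun s m hm1 hm2 => ?_)
    apply SimplexCategory.Hom.ext
    apply OrderHom.ext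
    funext w
    apply hp₂inj
    have h1 : p₂.toOrderHom (m.toOrderHom w) = s.snd.toOrderHom w := by
      have := congrArg (fun h => SimplexCategory.Hom.toOrderHom h w) hm2
      simpa [SimplexCategory.comp_toOrderHom] using this
    have h2 : p₂.toOrderHom
        (((liftdef s.pt s.fst s.snd s.condition).choose).toOrderHom w) =
        s.snd.toOrderHom w := by
      have := congrArg (fun h => SimplexCategory.Hom.toOrderHom h w)
        (liftdef s.pt s.fst s.snd s.condition).choose_spec.2
      simpa [SimplexCategory.comp_toOrderHom] using this
    rw [h1, h2]
  · rw [SimplexCategory.epi_iff_surjective]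
    intro x
    obtain ⟨y, hy⟩ := hκsurj (d.toOrderHom x)
    have hyS : y ∈ S := (hmemS y).mpr ⟨x, hy.symm⟩
    refine ⟨e.symm ⟨y, hyS⟩, ?_⟩
    rw [hp₁_apply]
    have h2 : p₂.toOrderHom (e.symm ⟨y, hyS⟩) = y := by
      rw [hp₂_apply, OrderIso.apply_symm_apply]
    apply hdinj
    rw [hr _ (by rw [h2]; exact (hmemS _).mp hyS), h2, hy]
end

section
/- The projection functor π̄ : fat Delta → Δ₊ sending an object η : [m] ↠ [n] to [m] and a commutative square to its top arrow is a Grothendieck opfibration. -/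
open CategoryTheory SimplexCategory

/-- Fat Delta: objects are epimorphisms in the simplex category. -/
structure FatDelta : Type where
  m : ℕ
  n : ℕ
  hom : SimplexCategory.mk m ⟶ SimplexCategory.mk n
  epi : Epi hom

namespace FatDelta

/-- Morphisms of fat Delta: commutative squares with a monomorphism on top. -/
structure Hom (A B : FatDelta) : Type where
  top : SimplexCategory.mk A.m ⟶ SimplexCategory.mk B.m
  bot : SimplexCategory.mk A.n ⟶ SimplexCategory.mk B.n
  mono : Mono top
  comm : A.hom ≫ bot = top ≫ B.hom

theorem Hom.ext' {A B : FatDelta} {f g : Hom A B} (h1 : f.top = g.top)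
    (h2 : f.bot = g.bot) : f = g := by
  cases f; cases g; simp_all

instance : Category FatDelta where
  Hom := Hom
  id A := ⟨𝟙 _, 𝟙 _, inferInstance, by simp⟩
  comp f g := ⟨f.top ≫ g.top, f.bot ≫ g.bot,
    by haveI := f.mono; haveI := g.mono; exact mono_comp _ _,
    by rw [← Category.assoc, f.comm, Category.assoc, g.comm, Category.assoc]⟩
  id_comp f := Hom.ext' (by simp) (by simp)
  comp_id f := Hom.ext' (by simp) (by simp)
  assoc f g h := Hom.ext' (by simp) (by simp)

@[simp] theorem comp_top {A B C : FatDelta} (f : A ⟶ B) (g : B ⟶ C) :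
    Hom.top (f ≫ g) = Hom.top f ≫ Hom.top g := rfl

@[simp] theorem comp_bot {A B C : FatDelta} (f : A ⟶ B) (g : B ⟶ C) :
    Hom.bot (f ≫ g) = Hom.bot f ≫ Hom.bot g := rfl

@[simp] theorem id_top {A : FatDelta} : Hom.top (𝟙 A) = 𝟙 _ := rfl
@[simp] theorem id_bot {A : FatDelta} : Hom.bot (𝟙 A) = 𝟙 _ := rfl

end FatDelta

/-- The semisimplex category `Δ₊`: the simplex category restricted to monomorphisms. -/
structure SemiSimplex : Type where
  n : ℕ

namespace SemiSimplex

structure Hom (a b : SemiSimplex) : Type where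
  f : SimplexCategory.mk a.n ⟶ SimplexCategory.mk b.n
  mono : Mono f

theorem Hom.ext' {a b : SemiSimplex} {f g : Hom a b} (h : f.f = g.f) : f = g := by
  cases f; cases g; simp_all

instance : Category SemiSimplex where
  Hom := Hom
  id a := ⟨𝟙 _, inferInstance⟩
  comp f g := ⟨f.f ≫ g.f, by haveI := f.mono; haveI := g.mono; exact mono_comp _ _⟩
  id_comp f := Hom.ext' (by simp)
  comp_id f := Hom.ext' (by simp)
  assoc f g h := Hom.ext' (by simp)

end SemiSimplex

/-- The projection `π̄ : fat Delta ⥤ Δ₊`, sending an epimorphism `η : [m] ↠ [n]` to `[m]`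
and a square to its top arrow. -/
def fatDeltaProj : FatDelta ⥤ SemiSimplex where
  obj A := ⟨A.m⟩
  map g := ⟨FatDelta.Hom.top g, FatDelta.Hom.mono g⟩
  map_id A := SemiSimplex.Hom.ext' rfl
  map_comp f g := SemiSimplex.Hom.ext' rfl
/-!
The lift of a monomorphism `u : [m] ↪ [m']` at `η : [m] ↠ [n]` is the pushout of `η` along `u`,
which exists in `Δ`: it is the monotone surjection out of `[m']` contracting exactly those steps
`k → k + 1` lying between `u i` and `u j` for some `i, j` with `η i = η j`. A square of fat Delta
that is a pushout in `Δ` is cocartesian over `Δ₊`, because a morphism over an identity has identity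
top arrow and its bottom arrow is then forced by the pushout property.
-/

theorem Fin.apply_eq_of_forall_step {N : ℕ} {γ : Type*} (w : Fin (N + 1) → γ)
    {x y : Fin (N + 1)} (hxy : x ≤ y)
    (hstep : ∀ k : Fin N, x ≤ k.castSucc → k.succ ≤ y → w k.castSucc = w k.succ) :
    w x = w y := by
  induction y using Fin.induction with
  | zero => rw [Fin.le_zero_iff.mp hxy]
  | succ k ih =>
    rcases hxy.eq_or_lt with rfl | hlt
    · rfl
    have hxk : x ≤ k.castSucc := Fin.le_castSucc_iff.mpr hlt
    calc w x = w k.castSucc :=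
          ih hxk fun j hxj hjk => hstep j hxj (hjk.trans k.castSucc_le_succ)
      _ = w k.succ := hstep k hxk le_rfl

theorem Nat.exists_le_count_eq (p : ℕ → Prop) [DecidablePred p] {N z : ℕ}
    (hz : z ≤ Nat.count p N) : ∃ t ≤ N, Nat.count p t = z := by
  induction N with
  | zero => exact ⟨0, le_rfl, by simp only [Nat.count_zero] at hz ⊢; omega⟩
  | succ N ih =>
    rcases le_or_gt z (Nat.count p N) with h | h
    · obtain ⟨t, ht, rfl⟩ := ih h
      exact ⟨t, ht.trans N.le_succ, rfl⟩
    · refine ⟨N + 1, le_rfl, le_antisymm ?_ hz⟩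
      rw [Nat.count_succ]
      split_ifs <;> omega

theorem OrderHom.exists_comp_eq_of_surjective {α β γ : Type*} [LinearOrder α] [PartialOrder β]
    [Preorder γ] (e : α →o β) (he : Function.Surjective e) (g : α →o γ)
    (hg : ∀ x y, e x = e y → g x = g y) : ∃ h : β →o γ, h.comp e = g := by
  refine ⟨⟨g ∘ Function.surjInv he, fun z z' hzz' => ?_⟩, ?_⟩
  · rcases le_total (Function.surjInv he z) (Function.surjInv he z') with h | h
    · exact g.monotone h
    · have hz'z : z' ≤ z := by
        simpa only [Function.surjInv_eq] using e.monotone h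
      rw [le_antisymm hzz' hz'z]
  · ext x
    exact hg _ _ (Function.surjInv_eq he (e x))

section Collapse

variable (C : ℕ → Prop) [DecidablePred C] (N : ℕ)

/-- `t` goes to the number of steps `k → k + 1` below it with `¬ C k`, so that exactly the steps
with `C k` are contracted. -/
def collapseHom : Fin (N + 1) →o Fin (Nat.count (fun k => ¬ C k) N + 1) where
  toFun t := ⟨Nat.count _ t, Nat.lt_succ_of_le (Nat.count_monotone _ t.is_le)⟩
  monotone' _ _ h := Nat.count_monotone _ h

theorem collapseHom_surjective : Function.Surjective (collapseHom C N) := fun z => by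
  obtain ⟨t, ht, htz⟩ := Nat.exists_le_count_eq _ z.is_le
  exact ⟨⟨t, Nat.lt_succ_of_le ht⟩, Fin.ext htz⟩

variable {C N}

theorem collapseHom_eq_iff {x y : Fin (N + 1)} (hxy : x ≤ y) :
    collapseHom C N x = collapseHom C N y ↔ ∀ k : ℕ, x ≤ k → k < y → C k := by
  constructor
  · intro h k hxk hky
    by_contra hk
    have hlt := (Nat.count_monotone _ hxk).trans_lt
      (Nat.count_strict_mono (p := fun k => ¬ C k) hk hky)
    exact hlt.ne (congrArg Fin.val h)
  · refine fun h => Fin.apply_eq_of_forall_step _ hxy fun k hxk hky => Fin.ext ?_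
    exact (Nat.count_succ_eq_count_iff.mpr (not_not.mpr (h k hxk hky))).symm

end Collapse

namespace SimplexCategory

open Limits

theorem exists_comp_eq_of_epi {a b c : SimplexCategory} (e : a ⟶ b) [Epi e] (g : a ⟶ c)
    (hg : ∀ x y, e.toOrderHom x = e.toOrderHom y → g.toOrderHom x = g.toOrderHom y) :
    ∃ h : b ⟶ c, e ≫ h = g := by
  obtain ⟨h, hh⟩ := OrderHom.exists_comp_eq_of_surjective e.toOrderHom
    (epi_iff_surjective.mp inferInstance) g.toOrderHom hg
  exact ⟨Hom.mk h, Hom.ext _ _ hh⟩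

variable {a b c : SimplexCategory} (η : a ⟶ b) (u : a ⟶ c)

/-- The steps `k → k + 1` of `c` contracted in the pushout of `η` along `u`. -/
def IsCollapsedStep (k : ℕ) : Prop :=
  ∃ i j, η.toOrderHom i = η.toOrderHom j ∧ (u.toOrderHom i : ℕ) ≤ k ∧ k < u.toOrderHom j

open Classical in
noncomputable def epiPushout : SimplexCategory :=
  mk (Nat.count (fun k => ¬ IsCollapsedStep η u k) c.len)

open Classical in
noncomputable def epiPushoutInr : c ⟶ epiPushout η u :=
  Hom.mk (collapseHom (IsCollapsedStep η u) c.len)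

open Classical in
instance epi_epiPushoutInr : Epi (epiPushoutInr η u) :=
  epi_iff_surjective.mpr (collapseHom_surjective _ _)

theorem epiPushoutInr_apply_eq_iff {x y : Fin (c.len + 1)} (hxy : x ≤ y) :
    (epiPushoutInr η u).toOrderHom x = (epiPushoutInr η u).toOrderHom y ↔
      ∀ k : ℕ, x ≤ k → k < y → IsCollapsedStep η u k := by
  classical
  exact collapseHom_eq_iff hxy

theorem epiPushoutInr_apply_eq {i j : Fin (a.len + 1)}
    (hij : η.toOrderHom i = η.toOrderHom j) :
    (epiPushoutInr η u).toOrderHom (u.toOrderHom i) =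
      (epiPushoutInr η u).toOrderHom (u.toOrderHom j) := by
  rcases le_total (u.toOrderHom i) (u.toOrderHom j) with h | h
  · exact (epiPushoutInr_apply_eq_iff η u h).mpr fun k hik hkj => ⟨i, j, hij, hik, hkj⟩
  · exact ((epiPushoutInr_apply_eq_iff η u h).mpr
      fun k hjk hki => ⟨j, i, hij.symm, hjk, hki⟩).symm

theorem apply_eq_of_isCollapsedStep {d : SimplexCategory} {v : b ⟶ d} {w : c ⟶ d}
    (hvw : η ≫ v = u ≫ w) {k : Fin c.len} (hk : IsCollapsedStep η u k) :
    w.toOrderHom k.castSucc = w.toOrderHom k.succ := by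
  obtain ⟨i, j, hij, hik, hkj⟩ := hk
  have hvw' (x) : v.toOrderHom (η.toOrderHom x) = w.toOrderHom (u.toOrderHom x) :=
    congrArg (fun f => f.toOrderHom x) hvw
  have hw : w.toOrderHom (u.toOrderHom i) = w.toOrderHom (u.toOrderHom j) := by
    rw [← hvw', ← hvw', hij]
  refine le_antisymm (w.toOrderHom.monotone k.castSucc_le_succ) ?_
  calc w.toOrderHom k.succ ≤ w.toOrderHom (u.toOrderHom j) := w.toOrderHom.monotone hkj
    _ = w.toOrderHom (u.toOrderHom i) := hw.symm
    _ ≤ w.toOrderHom k.castSucc := w.toOrderHom.monotone hik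

theorem apply_eq_of_epiPushoutInr_apply_eq {d : SimplexCategory} {v : b ⟶ d} {w : c ⟶ d}
    (hvw : η ≫ v = u ≫ w) {x y : Fin (c.len + 1)}
    (hxy : (epiPushoutInr η u).toOrderHom x = (epiPushoutInr η u).toOrderHom y) :
    w.toOrderHom x = w.toOrderHom y := by
  wlog hle : x ≤ y generalizing x y
  · exact (this hxy.symm (not_le.mp hle).le).symm
  have hcol := (epiPushoutInr_apply_eq_iff η u hle).mp hxy
  exact Fin.apply_eq_of_forall_step _ hle fun k hxk hky =>
    apply_eq_of_isCollapsedStep η u hvw (hcol k hxk hky)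

variable [Epi η]

noncomputable def epiPushoutInl : b ⟶ epiPushout η u :=
  (exists_comp_eq_of_epi η (u ≫ epiPushoutInr η u) fun _ _ hij =>
    epiPushoutInr_apply_eq η u hij).choose

theorem epiPushout_comm : η ≫ epiPushoutInl η u = u ≫ epiPushoutInr η u :=
  (exists_comp_eq_of_epi η (u ≫ epiPushoutInr η u) fun _ _ hij =>
    epiPushoutInr_apply_eq η u hij).choose_spec

theorem isPushout_epiPushout : IsPushout η u (epiPushoutInl η u) (epiPushoutInr η u) := by
  have desc (s : PushoutCocone η u) : ∃ l, epiPushoutInr η u ≫ l = s.inr :=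
    exists_comp_eq_of_epi _ s.inr fun _ _ => apply_eq_of_epiPushoutInr_apply_eq η u s.condition
  refine .of_isColimit' ⟨epiPushout_comm η u⟩ <|
    PushoutCocone.IsColimit.mk _ (fun s => (desc s).choose) (fun s => ?_)
      (fun s => (desc s).choose_spec) (fun s l _ hl => ?_)
  · rw [← cancel_epi η, reassoc_of% epiPushout_comm η u, (desc s).choose_spec, s.condition]
  · rw [← cancel_epi (epiPushoutInr η u), hl, (desc s).choose_spec]

end SimplexCategory

namespace FatDelta

theorem isHomLift_iff {a b : FatDelta} (f : fatDeltaProj.obj a ⟶ fatDeltaProj.obj b)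
    (φ : a ⟶ b) : fatDeltaProj.IsHomLift f φ ↔ f.f = φ.top := by
  refine ⟨fun _ => congrArg SemiSimplex.Hom.f (IsHomLift.eq_of_isHomLift _ f φ), fun h => ?_⟩
  obtain rfl : f = fatDeltaProj.map φ := SemiSimplex.Hom.ext' h
  infer_instance

theorem isCocartesian_of_isPushout {a b : FatDelta} (φ : a ⟶ b)
    (hφ : IsPushout a.hom φ.top φ.bot b.hom) :
    fatDeltaProj.IsCocartesian (fatDeltaProj.map φ) φ := by
  refine ⟨fun {b'} φ' hφ' => ?_⟩
  obtain ⟨m, n, κ, hκ⟩ := b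
  obtain ⟨m', n', w, hw⟩ := b'
  obtain rfl : m = m' :=
    (congrArg SemiSimplex.n (IsHomLift.codomain_eq fatDeltaProj (fatDeltaProj.map φ) φ')).symm
  have htop : φ.top = φ'.top := (isHomLift_iff _ φ').mp hφ'
  have hcomm : a.hom ≫ φ'.bot = φ.top ≫ w := htop ▸ φ'.comm
  let χ : (⟨m, n, κ, hκ⟩ : FatDelta) ⟶ ⟨m, n', w, hw⟩ :=
    ⟨𝟙 _, hφ.desc φ'.bot w hcomm, inferInstance, by simp⟩
  refine ⟨χ, ⟨(isHomLift_iff _ χ).mpr rfl,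
    Hom.ext' ((Category.comp_id _).trans htop) (by simp [χ])⟩, ?_⟩
  rintro ψ ⟨hψ, hφψ⟩
  have hψtop : ψ.top = 𝟙 _ := ((isHomLift_iff _ ψ).mp hψ).symm
  refine Hom.ext' hψtop (hφ.hom_ext ?_ ?_)
  · simpa [χ] using congrArg Hom.bot hφψ
  · simp [χ, ψ.comm, hψtop]

end FatDelta

/-- The projection `π̄ : fat Delta ⥤ Δ₊` is a Grothendieck opfibration: every arrow of
`Δ₊` out of the image of an object of fat Delta has a cocartesian lift. -/
theorem fatDeltaProj_isOpFibration :
    ∀ (a : FatDelta) (S : SemiSimplex) (f : fatDeltaProj.obj a ⟶ S),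
      ∃ (b : FatDelta) (hb : fatDeltaProj.obj b = S) (φ : a ⟶ b),
        fatDeltaProj.IsCocartesian f φ := by
  rintro ⟨m, n, η, hη⟩ ⟨m'⟩ f
  let u : mk m ⟶ mk m' := f.f
  let φ : (⟨m, n, η, hη⟩ : FatDelta) ⟶ ⟨m', _, epiPushoutInr η u, epi_epiPushoutInr η u⟩ :=
    ⟨u, epiPushoutInl η u, f.mono, epiPushout_comm η u⟩
  exact ⟨_, rfl, φ, FatDelta.isCocartesian_of_isPushout φ (isPushout_epiPushout η u)⟩
end

section
/- The relative semiordinal sum ⊕, induced on fat Delta by applying the ordinal sum to domains and codomains of epimorphisms, equips the augmented fat Delta category (epimorphisms in augmented Δ, including the empty ordinal) with a strict monoidal structure whose unit is the empty epimorphism. -/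
open CategoryTheory

/-- The augmented fat Delta category: objects are the epimorphisms of the augmented
simplex category (surjective monotone maps between finite, possibly empty, linear
orders), and morphisms are commutative squares with an injective monotone map on top. -/
structure AugFatDelta : Type where
  m : ℕ
  n : ℕ
  hom : Fin m →o Fin n
  surj : Function.Surjective hom

namespace AugFatDelta

structure Hom (A B : AugFatDelta) : Type where
  top : Fin A.m →o Fin B.m
  bot : Fin A.n →o Fin B.n
  inj : Function.Injective top
  comm : ∀ x, B.hom (top x) = bot (A.hom x)

theorem Hom.ext' {A B : AugFatDelta} {f g : Hom A B} (h1 : f.top = g.top)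
    (h2 : f.bot = g.bot) : f = g := by
  cases f; cases g; simp_all

instance : Category AugFatDelta where
  Hom := Hom
  id A := ⟨OrderHom.id, OrderHom.id, fun _ _ h => h, fun _ => rfl⟩
  comp f g := ⟨g.top.comp f.top, g.bot.comp f.bot, g.inj.comp f.inj,
    fun x => by simp [OrderHom.comp, f.comm, g.comm]⟩
  id_comp f := Hom.ext' rfl rfl
  comp_id f := Hom.ext' rfl rfl
  assoc f g h := Hom.ext' rfl rfl

/-- The relative semiordinal sum of two objects of augmented fat Delta, given by the
ordinal sum (join) on domains and codomains. -/
def sumObj (A B : AugFatDelta) : AugFatDelta where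
  m := A.m + B.m
  n := A.n + B.n
  hom :=
    { toFun := fun x =>
        if h : (x : ℕ) < A.m then Fin.castAdd B.n (A.hom ⟨x, h⟩)
        else Fin.natAdd A.n (B.hom ⟨(x : ℕ) - A.m, by omega⟩)
      monotone' := by
        intro a b hab
        by_cases h1 : (a : ℕ) < A.m
        · by_cases h2 : (b : ℕ) < A.m
          · simp only [h1, h2, dif_pos]
            have : A.hom ⟨a, h1⟩ ≤ A.hom ⟨b, h2⟩ := A.hom.monotone (by
              simp only [Fin.mk_le_mk]
              exact hab)
            simp only [Fin.le_def, Fin.coe_castAdd]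
            exact this
          · simp only [h1, h2, dif_pos, dif_neg, not_false_iff]
            have := (A.hom ⟨a, h1⟩).isLt
            simp only [Fin.le_def, Fin.coe_castAdd, Fin.coe_natAdd]
            omega
        · have h2 : ¬ (b : ℕ) < A.m := by have : (a : ℕ) ≤ b := hab; omega
          simp only [h1, h2, dif_neg, not_false_iff]
          have : B.hom ⟨(a : ℕ) - A.m, by omega⟩ ≤ B.hom ⟨(b : ℕ) - A.m, by omega⟩ := by
            apply B.hom.monotone
            have : (a : ℕ) ≤ b := hab
            simp only [Fin.mk_le_mk]
            omega
          simp only [Fin.le_def, Fin.coe_natAdd]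
          omega }
  surj := by
    intro y
    by_cases h : (y : ℕ) < A.n
    · obtain ⟨x, hx⟩ := A.surj ⟨y, h⟩
      refine ⟨Fin.castAdd B.m x, ?_⟩
      have hx' : ((Fin.castAdd B.m x : Fin (A.m + B.m)) : ℕ) < A.m := x.isLt
      erw [OrderHom.coe_mk]
      simp only [OrderHom.coe_mk, hx', dif_pos]
      apply Fin.ext
      simp only [Fin.coe_castAdd, Fin.eta, hx]
    · obtain ⟨x, hx⟩ := B.surj ⟨(y : ℕ) - A.n, by omega⟩
      refine ⟨Fin.natAdd A.m x, ?_⟩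
      have hx' : ¬ ((Fin.natAdd A.m x : Fin (A.m + B.m)) : ℕ) < A.m := by
        simp only [Fin.coe_natAdd]; omega
      erw [OrderHom.coe_mk]
      simp only [OrderHom.coe_mk, hx', dif_neg, not_false_iff]
      apply Fin.ext
      simp only [Fin.coe_natAdd]
      have h2 : A.m + (x : ℕ) - A.m = (x : ℕ) := by omega
      simp only [h2, Fin.eta, hx]
      omega

/-- The empty epimorphism, the unit of the relative semiordinal sum. -/
def emptyObj : AugFatDelta where
  m := 0
  n := 0
  hom := OrderHom.id
  surj := fun y => y.elim0

end AugFatDelta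

/-- A strict monoidal structure on a category: a tensor product on objects and morphisms
which is functorial, together with *equalities* (rather than mere isomorphisms) of
objects witnessing associativity and unitality, compatible with the tensor product of
morphisms. -/
structure StrictMonoidalStructure (C : Type*) [Category C] where
  tensorObj : C → C → C
  tensorUnit : C
  tensorHom : ∀ {A B X Y : C}, (A ⟶ B) → (X ⟶ Y) → (tensorObj A X ⟶ tensorObj B Y)
  tensor_id : ∀ (A X : C), tensorHom (𝟙 A) (𝟙 X) = 𝟙 (tensorObj A X)
  tensor_comp : ∀ {A B C' X Y Z : C} (f : A ⟶ B) (g : B ⟶ C') (f' : X ⟶ Y) (g' : Y ⟶ Z),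
    tensorHom (f ≫ g) (f' ≫ g') = tensorHom f f' ≫ tensorHom g g'
  assoc : ∀ A B C' : C, tensorObj (tensorObj A B) C' = tensorObj A (tensorObj B C')
  unit_left : ∀ A : C, tensorObj tensorUnit A = A
  unit_right : ∀ A : C, tensorObj A tensorUnit = A
  assoc_hom : ∀ {A B C' X Y Z : C} (f : A ⟶ X) (g : B ⟶ Y) (h : C' ⟶ Z),
    tensorHom (tensorHom f g) h ≫ eqToHom (assoc X Y Z) =
      eqToHom (assoc A B C') ≫ tensorHom f (tensorHom g h)
  unit_left_hom : ∀ {A X : C} (f : A ⟶ X),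
    tensorHom (𝟙 tensorUnit) f ≫ eqToHom (unit_left X) = eqToHom (unit_left A) ≫ f
  unit_right_hom : ∀ {A X : C} (f : A ⟶ X),
    tensorHom f (𝟙 tensorUnit) ≫ eqToHom (unit_right X) = eqToHom (unit_right A) ≫ f

/-! The join of monotone maps `f : [a] → [c]` and `g : [b] → [d]` acts as `f` on the initial
segment of `[a] ⊕ [b]` and as `g`, shifted by `c`, on the final one. It preserves injectivity,
identities and composition, so the join of two commutative squares is again one and `⊕` is a
functor. Associativity and unitality of the join hold on the nose once `Fin (a + b + c)` and
`Fin (a + (b + c))` (resp. `Fin (0 + b)` and `Fin b`) are identified by the canonical cast. Since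
`eqToHom` is that cast on tops and bottoms, these identities give both the equalities of objects
and their compatibility with morphisms. -/

namespace OrderHom

variable {a b c d : ℕ}

-- Written exactly as the map of `sumObj`, so that `(sumObj A B).hom` is `A.hom.finJoin B.hom`
-- by `rfl`.
def finJoin (f : Fin a →o Fin c) (g : Fin b →o Fin d) : Fin (a + b) →o Fin (c + d) where
  toFun x := if h : (x : ℕ) < a then Fin.castAdd d (f ⟨x, h⟩)
    else Fin.natAdd c (g ⟨(x : ℕ) - a, by omega⟩)
  monotone' := by
    intro x y hxy
    induction x using Fin.addCases with
    | left i =>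
      induction y using Fin.addCases with
      | left i' => simpa using Fin.strictMono_castAdd d |>.monotone (f.monotone hxy)
      | right j' => simpa [Fin.le_def] using Nat.le_add_right_of_le (f i).isLt.le
    | right j =>
      induction y using Fin.addCases with
      | left i' =>
        simp only [Fin.le_def, Fin.val_natAdd, Fin.val_castAdd] at hxy
        omega
      | right j' => simpa using g.monotone ((Fin.natAdd_le_natAdd_iff a).1 hxy)

lemma finJoin_apply (f : Fin a →o Fin c) (g : Fin b →o Fin d) (x : Fin (a + b)) :
    finJoin f g x = if h : (x : ℕ) < a then Fin.castAdd d (f ⟨x, h⟩)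
      else Fin.natAdd c (g ⟨(x : ℕ) - a, by omega⟩) := rfl

@[simp]
lemma finJoin_castAdd (f : Fin a →o Fin c) (g : Fin b →o Fin d) (i : Fin a) :
    finJoin f g (Fin.castAdd b i) = Fin.castAdd d (f i) := by
  simp [finJoin_apply]

@[simp]
lemma finJoin_natAdd (f : Fin a →o Fin c) (g : Fin b →o Fin d) (j : Fin b) :
    finJoin f g (Fin.natAdd a j) = Fin.natAdd c (g j) := by
  simp [finJoin_apply]

lemma finJoin_injective {f : Fin a →o Fin c} {g : Fin b →o Fin d}
    (hf : Function.Injective f) (hg : Function.Injective g) :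
    Function.Injective (finJoin f g) := by
  intro x y hxy
  induction x using Fin.addCases with
  | left i =>
    induction y using Fin.addCases with
    | left i' => simpa [hf.eq_iff] using hxy
    | right j' =>
      simp only [finJoin_castAdd, finJoin_natAdd, Fin.ext_iff, Fin.val_castAdd,
        Fin.val_natAdd] at hxy
      omega
  | right j =>
    induction y using Fin.addCases with
    | left i' =>
      simp only [finJoin_castAdd, finJoin_natAdd, Fin.ext_iff, Fin.val_castAdd,
        Fin.val_natAdd] at hxy
      omega
    | right j' => simpa [hg.eq_iff] using hxy

@[simp]
lemma finJoin_id : finJoin (OrderHom.id : Fin a →o Fin a) (OrderHom.id : Fin b →o Fin b) =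
    OrderHom.id := by
  ext x
  induction x using Fin.addCases <;> simp

lemma finJoin_comp {a' b' : ℕ} (f : Fin a →o Fin a') (g : Fin a' →o Fin c)
    (f' : Fin b →o Fin b') (g' : Fin b' →o Fin d) :
    finJoin (g.comp f) (g'.comp f') = (finJoin g g').comp (finJoin f f') := by
  ext x
  induction x using Fin.addCases <;> simp

lemma cast_finJoin_finJoin {e k : ℕ} (f : Fin a →o Fin c) (g : Fin b →o Fin d)
    (h : Fin e →o Fin k) (x : Fin (a + b + e)) :
    Fin.cast (add_assoc c d k) (finJoin (finJoin f g) h x) =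
      finJoin f (finJoin g h) (Fin.cast (add_assoc a b e) x) := by
  induction x using Fin.addCases with
  | left i =>
    induction i using Fin.addCases <;>
      simp only [finJoin_castAdd, finJoin_natAdd] <;> simp [Fin.castAdd_castAdd, Fin.castAdd_natAdd]
  | right j =>
    rw [show Fin.cast (add_assoc a b e) (Fin.natAdd (a + b) j) = Fin.natAdd a (Fin.natAdd b j) from
      Fin.ext (add_assoc a b j)]
    simp only [finJoin_natAdd]
    simp [Fin.natAdd_natAdd]

lemma cast_finJoin_zero_left (f : Fin 0 →o Fin 0) (g : Fin b →o Fin d) (x : Fin (0 + b)) :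
    Fin.cast (zero_add d) (finJoin f g x) = g (Fin.cast (zero_add b) x) := by
  induction x using Fin.addCases with
  | left i => exact i.elim0
  | right j => rw [finJoin_natAdd]; simp

lemma cast_finJoin_zero_right (f : Fin a →o Fin c) (g : Fin 0 →o Fin 0) (x : Fin (a + 0)) :
    Fin.cast (add_zero c) (finJoin f g x) = f (Fin.cast (add_zero a) x) := by
  induction x using Fin.addCases with
  | left i => rw [finJoin_castAdd]; rfl
  | right j => exact j.elim0

end OrderHom

namespace AugFatDelta

open OrderHom

lemma Hom.comm_comp {A B : AugFatDelta} (f : A ⟶ B) : B.hom.comp f.top = f.bot.comp A.hom :=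
  OrderHom.ext _ _ (funext f.comm)

lemma ext_of_cast {A B : AugFatDelta} (hm : A.m = B.m) (hn : A.n = B.n)
    (h : ∀ x, Fin.cast hn (A.hom x) = B.hom (Fin.cast hm x)) : A = B := by
  obtain ⟨m, n, f, _⟩ := A
  obtain ⟨m', n', f', _⟩ := B
  obtain rfl : m = m' := hm
  obtain rfl : n = n' := hn
  obtain rfl : f = f' := OrderHom.ext _ _ (funext fun x => by simpa using h x)
  rfl

lemma comp_eqToHom_eq_eqToHom_comp {A A' B B' : AugFatDelta} (hA : A = A') (hB : B = B')
    (f : A ⟶ B) (f' : A' ⟶ B')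
    (htop : ∀ x, Fin.cast (congrArg m hB) (f.top x) = f'.top (Fin.cast (congrArg m hA) x))
    (hbot : ∀ x, Fin.cast (congrArg n hB) (f.bot x) = f'.bot (Fin.cast (congrArg n hA) x)) :
    f ≫ eqToHom hB = eqToHom hA ≫ f' := by
  subst hA hB
  simpa using Hom.ext' (OrderHom.ext _ _ (funext htop)) (OrderHom.ext _ _ (funext hbot))

def sumHom {A B X Y : AugFatDelta} (f : A ⟶ B) (g : X ⟶ Y) : sumObj A X ⟶ sumObj B Y where
  top := f.top.finJoin g.top
  bot := f.bot.finJoin g.bot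
  inj := finJoin_injective f.inj g.inj
  comm := DFunLike.congr_fun <| show (B.hom.finJoin Y.hom).comp (f.top.finJoin g.top) =
      (f.bot.finJoin g.bot).comp (A.hom.finJoin X.hom) by
    rw [← finJoin_comp, ← finJoin_comp, f.comm_comp, g.comm_comp]

def sumStrictMonoidal : StrictMonoidalStructure AugFatDelta where
  tensorObj := sumObj
  tensorUnit := emptyObj
  tensorHom := sumHom
  tensor_id _ _ := Hom.ext' finJoin_id finJoin_id
  tensor_comp f g f' g' := Hom.ext' (finJoin_comp f.top g.top f'.top g'.top)
    (finJoin_comp f.bot g.bot f'.bot g'.bot)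
  assoc A B C := ext_of_cast (add_assoc ..) (add_assoc ..) (cast_finJoin_finJoin A.hom B.hom C.hom)
  unit_left A := ext_of_cast (zero_add _) (zero_add _) (cast_finJoin_zero_left _ A.hom)
  unit_right A := ext_of_cast (add_zero _) (add_zero _) (cast_finJoin_zero_right A.hom _)
  assoc_hom f g h := comp_eqToHom_eq_eqToHom_comp _ _ _ _
    (cast_finJoin_finJoin f.top g.top h.top) (cast_finJoin_finJoin f.bot g.bot h.bot)
  unit_left_hom f := comp_eqToHom_eq_eqToHom_comp _ _ _ _
    (cast_finJoin_zero_left _ f.top) (cast_finJoin_zero_left _ f.bot)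
  unit_right_hom f := comp_eqToHom_eq_eqToHom_comp _ _ _ _
    (cast_finJoin_zero_right f.top _) (cast_finJoin_zero_right f.bot _)

end AugFatDelta

/-- The relative semiordinal sum `⊕` equips the augmented fat Delta category with a
strict monoidal structure whose unit is the empty epimorphism. -/
theorem augFatDelta_strictMonoidal :
    ∃ S : StrictMonoidalStructure AugFatDelta,
      (∀ A B : AugFatDelta, S.tensorObj A B = AugFatDelta.sumObj A B) ∧
      S.tensorUnit = AugFatDelta.emptyObj :=
  ⟨AugFatDelta.sumStrictMonoidal, fun _ _ => rfl, rfl⟩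
end

section
/- For each standard face, the corresponding commutative square in Δ (with δ_{vᵢ} on top, δᵢ on bottom, and epimorphisms η and its restriction as vertical maps) is simultaneously a pushout and a pullback square in Δ. -/
/-!
Every point of `[m+1]` other than `v` is `v.succAbove y`, and commutativity of the square
reads `η (v.succAbove y) = i.succAbove (dEta y)`. Since `v` lies over `i`, the first leg of a
cone over `η` and `δ i` avoids `v`, hence factors through `δ v`: this is the pullback. For the
pushout, the legs `η` and `dEta` are both epimorphisms, and the left leg of a cocone is constant
on the fibres of `η` (off `v` they are the fibres of `dEta`), so it factors through `η` by a
section of `η`.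
-/

open CategoryTheory SimplexCategory

namespace SimplexCategory

theorem exists_comp_eq_of_epi_s10 {X Y Z : SimplexCategory} (η : X ⟶ Y) [Epi η] (a : X ⟶ Z)
    (ha : ∀ x x', η.toOrderHom x = η.toOrderHom x' → a.toOrderHom x = a.toOrderHom x') :
    ∃ g : Y ⟶ Z, η ≫ g = a := by
  have := isSplitEpi_of_epi η
  refine ⟨section_ η ≫ a, Hom.ext _ _ (OrderHom.ext _ _ (funext fun x => ha _ _ ?_))⟩
  exact congr_arg (fun f => f.toOrderHom (η.toOrderHom x)) (IsSplitEpi.id η)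

section StandardFace

variable {m n : ℕ} {η : mk (m + 1) ⟶ mk (n + 1)} {i : Fin (n + 2)} {v : Fin (m + 2)}
  {dEta : mk m ⟶ mk n}

theorem apply_succAbove_of_δ_comp_eq (hcomm : δ v ≫ η = dEta ≫ δ i) (y : Fin (m + 1)) :
    η.toOrderHom (v.succAbove y) = i.succAbove (dEta.toOrderHom y) :=
  congr_arg (fun f => f.toOrderHom y) hcomm

theorem isPullback_δ_of_apply_eq (hcomm : δ v ≫ η = dEta ≫ δ i) (hv : η.toOrderHom v = i) :
    IsPullback (δ v) dEta η (δ i) := by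
  have avoids : ∀ (s : Limits.PullbackCone η (δ i)) x, s.fst.toOrderHom x ≠ v := by
    intro s x hx
    have hs : η.toOrderHom (s.fst.toOrderHom x) = i.succAbove (s.snd.toOrderHom x) :=
      congr_arg (fun f => f.toOrderHom x) s.condition
    rw [hx, hv] at hs
    exact Fin.succAbove_ne _ _ hs.symm
  choose lift hlift using fun s => eq_comp_δ_of_not_surjective' s.fst v (avoids s)
  refine IsPullback.of_isLimit' ⟨hcomm⟩
    (Limits.PullbackCone.IsLimit.mk _ lift (fun s => (hlift s).symm) (fun s => ?_)
      (fun s l hl _ => by rw [← cancel_mono (δ v), hl, ← hlift]))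
  rw [← cancel_mono (δ i), Category.assoc, ← hcomm, ← Category.assoc, ← hlift, s.condition]

theorem epi_of_δ_comp_eq [Epi η] (hcomm : δ v ≫ η = dEta ≫ δ i) (hv : η.toOrderHom v = i) :
    Epi dEta := by
  rw [epi_iff_surjective]
  intro z
  obtain ⟨x, hx⟩ := epi_iff_surjective.mp ‹Epi η› (i.succAbove z)
  have hxv : x ≠ v := by
    rintro rfl
    exact Fin.succAbove_ne i z (hx.symm.trans hv)
  obtain ⟨y, rfl⟩ := Fin.exists_succAbove_eq hxv
  exact ⟨y, Fin.succAbove_right_injective ((apply_succAbove_of_δ_comp_eq hcomm y).symm.trans hx)⟩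

theorem apply_eq_of_apply_eq_of_δ_comp_eq (hcomm : δ v ≫ η = dEta ≫ δ i)
    (hfiber : ∀ x, η.toOrderHom x = i ↔ x = v) {X : SimplexCategory} {a : mk (m + 1) ⟶ X}
    {b : mk n ⟶ X} (hab : δ v ≫ a = dEta ≫ b) {x x' : Fin (m + 2)}
    (hxx' : η.toOrderHom x = η.toOrderHom x') : a.toOrderHom x = a.toOrderHom x' := by
  by_cases hxi : η.toOrderHom x = i
  · rw [(hfiber x).mp hxi, (hfiber x').mp (hxx' ▸ hxi)]
  obtain ⟨y, rfl⟩ := Fin.exists_succAbove_eq fun h => hxi ((hfiber x).mpr h)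
  obtain ⟨y', rfl⟩ := Fin.exists_succAbove_eq fun h => hxi (hxx' ▸ (hfiber x').mpr h)
  have hy : dEta.toOrderHom y = dEta.toOrderHom y' := by
    apply Fin.succAbove_right_injective (p := i)
    rw [← apply_succAbove_of_δ_comp_eq hcomm, ← apply_succAbove_of_δ_comp_eq hcomm, hxx']
  have hab' := fun y => congr_arg (fun f => f.toOrderHom y) hab
  exact (hab' y).trans ((congr_arg b.toOrderHom hy).trans (hab' y').symm)

theorem isPushout_δ_of_fiber_eq [Epi η] (hcomm : δ v ≫ η = dEta ≫ δ i)
    (hfiber : ∀ x, η.toOrderHom x = i ↔ x = v) :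
    IsPushout (δ v) dEta η (δ i) := by
  have := epi_of_δ_comp_eq hcomm ((hfiber v).mpr rfl)
  choose desc hdesc using fun s : Limits.PushoutCocone (δ v) dEta =>
    exists_comp_eq_of_epi_s10 η s.inl fun _ _ =>
      apply_eq_of_apply_eq_of_δ_comp_eq hcomm hfiber s.condition
  refine IsPushout.of_isColimit' ⟨hcomm⟩
    (Limits.PushoutCocone.IsColimit.mk _ desc hdesc (fun s => ?_)
      (fun s l hl _ => by rw [← cancel_epi η, hl, hdesc]))
  rw [← cancel_epi dEta, ← Category.assoc, ← hcomm, Category.assoc, hdesc, s.condition]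

end StandardFace

end SimplexCategory

/-- The square of a standard face is both a pushout and a pullback in `Δ`: if
`η : [m+1] ↠ [n+1]` is an epimorphism, `i` is a standard vertex of the codomain (i.e.
its fiber is the singleton `{v}`), and `dEta : [m] → [n]` is the induced map making the
square with top `δ v`, bottom `δ i`, left `dEta` and right `η` commute, then this square is
simultaneously a pushout and a pullback square in `Δ`. -/
theorem simplexCategory_standardFace_isPushout_isPullback
    (m n : ℕ) (η : SimplexCategory.mk (m + 1) ⟶ SimplexCategory.mk (n + 1))
    (hη : Epi η) (i : Fin (n + 2)) (v : Fin (m + 2))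
    (hfiber : ∀ x : Fin (m + 2), η.toOrderHom x = i ↔ x = v)
    (dEta : SimplexCategory.mk m ⟶ SimplexCategory.mk n)
    (hcomm : SimplexCategory.δ v ≫ η = dEta ≫ SimplexCategory.δ i) :
    IsPushout (SimplexCategory.δ v) dEta η (SimplexCategory.δ i) ∧
      IsPullback (SimplexCategory.δ v) dEta η (SimplexCategory.δ i) :=
  ⟨isPushout_δ_of_fiber_eq hcomm hfiber,
    isPullback_δ_of_apply_eq hcomm ((hfiber v).mpr rfl)⟩
end

section
/- Let η : [m] ↠ [n] be an epimorphism in Δ and 0 < i < m such that precomposition ηδᵢ : [m−1] ↠ [n] satisfies that the square (δᵢ, id_[n]) is a morphism in fat Delta but is not a pushout square in Δ. Then this square factors as a standard face followed by a degenerated face; concretely there exists ε ∈ {0,1} with η ∘ δᵢ equal to the epimorphism obtained by unmarking at index η(i) − ε, i.e., the square equals the bordering extension w^{ε}_{η(i)−ε}. -/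
open CategoryTheory SimplexCategory

namespace FatDeltaAux

lemma coe_succAbove {k : ℕ} (c : Fin (k + 1)) (v : Fin k) :
    ((c.succAbove v : Fin (k + 1)) : ℕ) = if (v : ℕ) < (c : ℕ) then (v : ℕ) else (v : ℕ) + 1 := by
  rw [Fin.succAbove]
  split_ifs with h1 h2 h2 <;>
    simp_all [Fin.lt_def, Fin.coe_castSucc, Fin.val_succ]

lemma coe_predAbove {k : ℕ} (j : Fin k) (v : Fin (k + 1)) :
    ((j.predAbove v : Fin k) : ℕ) = if (j : ℕ) < (v : ℕ) then (v : ℕ) - 1 else (v : ℕ) := by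
  rw [Fin.predAbove]
  rcases Nat.lt_or_ge (j : ℕ) (v : ℕ) with h | h
  · rw [dif_pos (by rwa [Fin.lt_def, Fin.coe_castSucc]), if_pos h, Fin.coe_pred]
  · rw [dif_neg (by rw [Fin.lt_def, Fin.coe_castSucc]; omega), if_neg (by omega),
      Fin.coe_castPred]

lemma delta_apply {k : ℕ} (c : Fin (k + 2)) (v : Fin (k + 1)) :
    (SimplexCategory.δ c).toOrderHom v = c.succAbove v := rfl

lemma sigma_apply {k : ℕ} (j : Fin (k + 1)) (v : Fin (k + 2)) :
    (SimplexCategory.σ j).toOrderHom v = j.predAbove v := rfl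

/-- If the vertex `i` has neighbours on both sides in the same fibre of `η`, then the
square `(δ i, id)` is a pushout. -/
lemma inner_pushout (m n : ℕ) (η : SimplexCategory.mk (m + 1) ⟶ SimplexCategory.mk n)
    (i a b : Fin (m + 2)) (hai : a < i) (hib : i < b)
    (ha : η.toOrderHom a = η.toOrderHom i) (hb : η.toOrderHom b = η.toOrderHom i) :
    IsPushout (SimplexCategory.δ i) (SimplexCategory.δ i ≫ η) η
      (𝟙 (SimplexCategory.mk n)) := by
  have comm : SimplexCategory.δ i ≫ η = (SimplexCategory.δ i ≫ η) ≫ 𝟙 _ := by simp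
  exact IsPushout.of_isColimit (Limits.PushoutCocone.IsColimit.mk comm
    (fun s => s.inr)
    (fun s => by
      -- η ≫ s.inr = s.inl
      have key : ∀ y : Fin (m + 1),
          s.inl.toOrderHom (i.succAbove y) = s.inr.toOrderHom (η.toOrderHom (i.succAbove y)) := by
        intro y
        have := congrArg (fun f => Hom.toOrderHom f y) s.condition
        simpa [SimplexCategory.comp_toOrderHom, delta_apply] using this
      apply SimplexCategory.Hom.ext'
      apply OrderHom.ext
      funext x
      show s.inr.toOrderHom (η.toOrderHom x) = s.inl.toOrderHom x
      by_cases hx : x = i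
      · subst hx
        obtain ⟨ya, hya⟩ := Fin.exists_succAbove_eq (Fin.ne_of_lt hai : a ≠ x)
        obtain ⟨yb, hyb⟩ := Fin.exists_succAbove_eq (Fin.ne_of_gt hib : b ≠ x)
        have h1 : s.inl.toOrderHom a = s.inr.toOrderHom (η.toOrderHom x) := by
          have := key ya; rw [hya, ha] at this; exact this
        have h2 : s.inl.toOrderHom b = s.inr.toOrderHom (η.toOrderHom x) := by
          have := key yb; rw [hyb, hb] at this; exact this
        have hle1 : s.inl.toOrderHom a ≤ s.inl.toOrderHom x :=
          s.inl.toOrderHom.monotone (le_of_lt hai)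
        have hle2 : s.inl.toOrderHom x ≤ s.inl.toOrderHom b :=
          s.inl.toOrderHom.monotone (le_of_lt hib)
        apply le_antisymm
        · rw [← h1]; exact hle1
        · rw [← h2]; exact hle2
      · obtain ⟨y, hy⟩ := Fin.exists_succAbove_eq hx
        rw [← hy]
        exact (key y).symm)
    (fun s => Category.id_comp _)
    (fun s q h1 h2 => by simpa using h2))

/-- The common construction of the bordering extension for both values of `ε`. -/
lemma construct (m n : ℕ) (η : SimplexCategory.mk (m + 1) ⟶ SimplexCategory.mk n)
    (hs : Function.Surjective ⇑η.toOrderHom) (i : Fin (m + 2)) (t ε : ℕ)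
    (hε : ε = 0 ∨ ε = 1)
    (ht0 : ε = 0 → t = (i : ℕ) + 1) (ht1 : ε = 1 → t = (i : ℕ))
    (Hc1 : ∀ x : Fin (m + 2), (x : ℕ) < t → x ≠ i →
      (η.toOrderHom x : ℕ) < (η.toOrderHom i : ℕ) + ε)
    (Hc2 : ∀ x : Fin (m + 2), t ≤ (x : ℕ) → x ≠ i →
      (η.toOrderHom i : ℕ) + ε < (η.toOrderHom x : ℕ) + 1)
    (Hd0 : ε = 0 → ∃ x : Fin (m + 2), t ≤ (x : ℕ) ∧ η.toOrderHom x = η.toOrderHom i)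
    (Hd1 : ε = 1 → ∃ x : Fin (m + 2), (x : ℕ) < t ∧ η.toOrderHom x = η.toOrderHom i) :
    ∃ (κ : SimplexCategory.mk (m + 1) ⟶ SimplexCategory.mk (n + 1)),
      Epi κ ∧
      ∃ (c : Fin (n + 2)) (j : Fin (n + 1)) (ε : ℕ),
        (ε = 0 ∨ ε = 1) ∧
        (c : ℕ) = (j : ℕ) + ε ∧
        (j : ℕ) + ε = (κ.toOrderHom i : ℕ) ∧
        (∀ x : Fin (m + 2), κ.toOrderHom x = c ↔ x = i) ∧
        SimplexCategory.δ i ≫ κ = (SimplexCategory.δ i ≫ η) ≫ SimplexCategory.δ c ∧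
        κ ≫ SimplexCategory.σ j = η := by
  set f := η.toOrderHom with hf
  have fmono : ∀ x y : Fin (m + 2), (x : ℕ) ≤ (y : ℕ) → (f x : ℕ) ≤ (f y : ℕ) := by
    intro x y h
    exact f.monotone h
  have him : (f i : ℕ) ≤ n := (f i).is_le
  have hlenn : (SimplexCategory.mk n).len = n := rfl
  have hlenm : (SimplexCategory.mk (m + 1)).len = m + 1 := rfl
  have hεle : ε ≤ 1 := by rcases hε with h | h <;> omega
  have hti : (i : ℕ) ≤ t ∧ t ≤ (i : ℕ) + 1 := by
    rcases hε with h | h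
    · rw [ht0 h]; omega
    · rw [ht1 h]; omega
  -- the new epimorphism κ
  let κfun : Fin (m + 2) → Fin (n + 2) := fun x =>
    if (x : ℕ) < t then (f x).castSucc else (f x).succ
  have hκval : ∀ x, ((κfun x : Fin (n + 2)) : ℕ) =
      if (x : ℕ) < t then (f x : ℕ) else (f x : ℕ) + 1 := by
    intro x
    simp only [κfun]
    split_ifs <;> simp
  have κmono : Monotone κfun := by
    intro x y hxy
    have hxy' : (x : ℕ) ≤ (y : ℕ) := hxy
    have := fmono x y hxy'
    rw [Fin.le_def, hκval, hκval]
    split_ifs <;> omega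
  let κ : SimplexCategory.mk (m + 1) ⟶ SimplexCategory.mk (n + 1) :=
    SimplexCategory.mkHom ⟨κfun, κmono⟩
  have hκ : ∀ x, (κ.toOrderHom x : ℕ) =
      if (x : ℕ) < t then (f x : ℕ) else (f x : ℕ) + 1 := fun x => hκval x
  have hκi : (κ.toOrderHom i : ℕ) = (f i : ℕ) + ε := by
    rw [hκ]
    rcases hε with h | h
    · rw [if_pos (by rw [ht0 h]; omega)]; omega
    · rw [if_neg (by rw [ht1 h]; omega)]; omega
  -- the value c and the degeneracy index j
  let c : Fin (n + 2) := ⟨(f i : ℕ) + ε, by omega⟩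
  let j : Fin (n + 1) := f i
  refine ⟨κ, ?_, c, j, ε, hε, rfl, by rw [hκi], ?_, ?_, ?_⟩
  · -- Epi κ
    rw [SimplexCategory.epi_iff_surjective]
    intro v
    have hv2 : (v : ℕ) < n + 2 := v.isLt
    rcases Nat.lt_trichotomy (v : ℕ) ((f i : ℕ) + ε) with hv | hv | hv
    · -- v < c
      have hvn : (v : ℕ) ≤ n := by omega
      obtain ⟨x, hx⟩ := hs ⟨(v : ℕ), by omega⟩
      have hxval : (f x : ℕ) = (v : ℕ) := by rw [hx]
      clear hx
      by_cases hxt : (x : ℕ) < t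
      · exact ⟨x, by rw [Fin.ext_iff, hκ, if_pos hxt, hxval]⟩
      · by_cases hxi : x = i
        · subst hxi
          have hε1 : ε = 1 := by omega
          obtain ⟨x', hx't, hx'⟩ := Hd1 hε1
          refine ⟨x', ?_⟩
          rw [Fin.ext_iff, hκ, if_pos hx't, hx']
          omega
        · exact absurd (Hc2 x (by omega) hxi) (by omega)
    · exact ⟨i, by rw [Fin.ext_iff, hκi, hv]⟩
    · -- v > c
      have hvn : (v : ℕ) - 1 ≤ n := by omega
      obtain ⟨x, hx⟩ := hs ⟨(v : ℕ) - 1, by omega⟩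
      have hxval : (f x : ℕ) = (v : ℕ) - 1 := by rw [hx]
      clear hx
      by_cases hxt : (x : ℕ) < t
      · by_cases hxi : x = i
        · subst hxi
          have hε0 : ε = 0 := by omega
          obtain ⟨x', hx't, hx'⟩ := Hd0 hε0
          refine ⟨x', ?_⟩
          rw [Fin.ext_iff, hκ, if_neg (Nat.not_lt.mpr hx't), hx', hxval]
          exact Nat.sub_add_cancel (Nat.lt_of_le_of_lt (Nat.zero_le _) hv)
        · exact absurd (Hc1 x hxt hxi) (by omega)
      · exact ⟨x, by rw [Fin.ext_iff, hκ, if_neg hxt]; omega⟩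
  · -- fibre over c is exactly {i}
    intro x
    constructor
    · intro h
      by_contra hne
      have hval : (κ.toOrderHom x : ℕ) = (f i : ℕ) + ε := by rw [h]
      rw [hκ] at hval
      split_ifs at hval with hxt
      · exact absurd (Hc1 x hxt hne) (by omega)
      · exact absurd (Hc2 x (by omega) hne) (by omega)
    · rintro rfl
      rw [Fin.ext_iff, hκi]
  · -- δ i ≫ κ = (δ i ≫ η) ≫ δ c
    apply SimplexCategory.Hom.ext'
    apply OrderHom.ext
    funext y
    show κ.toOrderHom (i.succAbove y) = c.succAbove (f (i.succAbove y))
    set x := i.succAbove y with hxdef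
    have hxi : x ≠ i := Fin.succAbove_ne i y
    have hrhs : ((c.succAbove (f x) : Fin (n + 2)) : ℕ) =
        if ((f x : ℕ)) < ((c : ℕ)) then (f x : ℕ) else (f x : ℕ) + 1 :=
      coe_succAbove c (f x)
    have hcval : (c : ℕ) = (f i : ℕ) + ε := rfl
    rw [Fin.ext_iff, hκ, hrhs, hcval]
    by_cases hxt : (x : ℕ) < t
    · have := Hc1 x hxt hxi
      rw [if_pos hxt, if_pos this]
    · have := Hc2 x (by omega) hxi
      rw [if_neg hxt, if_neg (by omega)]
  · -- κ ≫ σ j = η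
    apply SimplexCategory.Hom.ext'
    apply OrderHom.ext
    funext x
    show j.predAbove (κ.toOrderHom x) = f x
    rw [Fin.ext_iff, coe_predAbove, hκ]
    by_cases hxt : (x : ℕ) < t
    · have hxle : (f x : ℕ) ≤ (f i : ℕ) := fmono x i (by omega)
      rw [if_pos hxt, if_neg (by show ¬ (f i : ℕ) < (f x : ℕ); omega)]
    · have hxge : (f i : ℕ) ≤ (f x : ℕ) := fmono i x (by omega)
      rw [if_neg hxt, if_pos (by show (f i : ℕ) < (f x : ℕ) + 1; omega)]
      omega

end FatDeltaAux

/-- Any morphism of fat Delta of the form `(δᵢ, id)` (i.e. whose underlying square in `Δ`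
has the coface `δ i` on top and the identity at the bottom) which is not a vertical face
(i.e. whose square is not a pushout in `Δ`) is a bordering extension: it factors as a
standard face (top `δ i`, bottom `δ c`, with `i` the unique vertex over `c`) followed by
a degenerated face (identity on top, `σ j` at the bottom), where `c = j + ε` for some
`ε ∈ {0, 1}` (so that the factorisation is the bordering extension `w^ε_{κ(i)-ε}`). -/
theorem fatDelta_non_pushout_coface_is_borderingExtension
    (m n : ℕ) (η : SimplexCategory.mk (m + 1) ⟶ SimplexCategory.mk n)
    (hη : Epi η) (i : Fin (m + 2))
    (hcomp : Epi (SimplexCategory.δ i ≫ η))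
    (hnotpo : ¬ IsPushout (SimplexCategory.δ i) (SimplexCategory.δ i ≫ η) η
      (𝟙 (SimplexCategory.mk n))) :
    ∃ (κ : SimplexCategory.mk (m + 1) ⟶ SimplexCategory.mk (n + 1)),
      Epi κ ∧
      ∃ (c : Fin (n + 2)) (j : Fin (n + 1)) (ε : ℕ),
        (ε = 0 ∨ ε = 1) ∧
        (c : ℕ) = (j : ℕ) + ε ∧
        (j : ℕ) + ε = (κ.toOrderHom i : ℕ) ∧
        (∀ x : Fin (m + 2), κ.toOrderHom x = c ↔ x = i) ∧
        SimplexCategory.δ i ≫ κ = (SimplexCategory.δ i ≫ η) ≫ SimplexCategory.δ c ∧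
        κ ≫ SimplexCategory.σ j = η := by
  have hs : Function.Surjective ⇑η.toOrderHom := SimplexCategory.epi_iff_surjective.mp hη
  have hs' : Function.Surjective ⇑(SimplexCategory.δ i ≫ η).toOrderHom :=
    SimplexCategory.epi_iff_surjective.mp hcomp
  -- from surjectivity of the composite, there is a vertex ≠ i in the fibre of i
  obtain ⟨w0, hw0⟩ := hs' (η.toOrderHom i)
  have hwit : ∃ w : Fin (m + 2), w ≠ i ∧ η.toOrderHom w = η.toOrderHom i := by
    refine ⟨i.succAbove w0, Fin.succAbove_ne i w0, ?_⟩
    exact hw0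
  obtain ⟨w, hwne, hweq⟩ := hwit
  by_cases HA : ∀ x : Fin (m + 2), x < i → η.toOrderHom x < η.toOrderHom i
  · -- case ε = 0
    have hwgt : i < w := by
      rcases lt_or_gt_of_ne hwne with h | h
      · exact absurd (hweq ▸ HA w h) (lt_irrefl _)
      · exact h
    exact FatDeltaAux.construct m n η hs i ((i : ℕ) + 1) 0 (Or.inl rfl)
      (fun _ => rfl) (fun h => by omega)
      (fun x hxt hxi => by
        have hxlt : x < i := by
          rw [Fin.lt_def]
          rcases Nat.lt_or_ge (x : ℕ) (i : ℕ) with h | h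
          · exact h
          · exact absurd (Fin.ext (by omega) : x = i) hxi
        have := HA x hxlt
        rw [Fin.lt_def] at this
        omega)
      (fun x hxt hxi => by
        have : (η.toOrderHom i : ℕ) ≤ (η.toOrderHom x : ℕ) := η.toOrderHom.monotone (show (i : ℕ) ≤ (x : ℕ) by omega)
        omega)
      (fun _ => ⟨w, by rw [Fin.lt_def] at hwgt; omega, hweq⟩)
      (fun h => by omega)
  · -- case ε = 1
    push_neg at HA
    obtain ⟨a, hai, hfa⟩ := HA
    have hfa' : η.toOrderHom a = η.toOrderHom i :=
      le_antisymm (η.toOrderHom.monotone (le_of_lt hai)) hfa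
    have HB : ∀ x : Fin (m + 2), i < x → η.toOrderHom i < η.toOrderHom x := by
      intro b hib
      by_contra hb
      have hfb : η.toOrderHom b = η.toOrderHom i := le_antisymm (not_lt.mp hb) (η.toOrderHom.monotone (le_of_lt hib))
      exact hnotpo (FatDeltaAux.inner_pushout m n η i a b hai hib hfa' hfb)
    exact FatDeltaAux.construct m n η hs i (i : ℕ) 1 (Or.inr rfl)
      (fun h => by omega) (fun _ => rfl)
      (fun x hxt hxi => by
        have : (η.toOrderHom x : ℕ) ≤ (η.toOrderHom i : ℕ) := η.toOrderHom.monotone (show (x : ℕ) ≤ (i : ℕ) by omega)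
        omega)
      (fun x hxt hxi => by
        have : i < x := by
          rw [Fin.lt_def]
          rcases Nat.lt_or_ge (i : ℕ) (x : ℕ) with h | h
          · exact h
          · exact absurd (Fin.ext (by omega) : x = i) hxi
        have := HB x this
        rw [Fin.lt_def] at this
        omega)
      (fun h => by omega)
      (fun _ => ⟨a, by rw [Fin.lt_def] at hai; omega, hfa'⟩)
end

section
/- If a commutative square with an active monomorphism on top and epis on the sides is a pushout in Δ, then its bottom arrow is an active monomorphism in Δ. -/
open CategoryTheory SimplexCategory

/-- A monotone map in `Δ` is active if it preserves the endpoints. -/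
def SimplexCategory.IsActive {a b : ℕ}
    (f : SimplexCategory.mk a ⟶ SimplexCategory.mk b) : Prop :=
  f.toOrderHom 0 = 0 ∧ f.toOrderHom (Fin.last a) = Fin.last b

/-- In fat Delta, every active morphism has an active monomorphism as bottom arrow: if a
commutative square in `Δ` with an active monomorphism `f` on top and epimorphisms `η`, `κ`
as vertical sides is a pushout, then its bottom arrow `g` is an active monomorphism. -/
theorem fatDelta_active_bottom_is_active_mono
    (m k n l : ℕ)
    (f : SimplexCategory.mk m ⟶ SimplexCategory.mk k)
    (η : SimplexCategory.mk m ⟶ SimplexCategory.mk n)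
    (κ : SimplexCategory.mk k ⟶ SimplexCategory.mk l)
    (g : SimplexCategory.mk n ⟶ SimplexCategory.mk l)
    (hf : Mono f) (hfa : SimplexCategory.IsActive f)
    (hη : Epi η) (hκ : Epi κ)
    (hpo : IsPushout f η κ g) :
    Mono g ∧ SimplexCategory.IsActive g := by
  obtain ⟨hf0, hfl⟩ := hfa
  have hfinj : Function.Injective f.toOrderHom :=
    SimplexCategory.mono_iff_injective.mp hf
  have hηs : Function.Surjective η.toOrderHom :=
    SimplexCategory.epi_iff_surjective.mp hη
  have hκs : Function.Surjective κ.toOrderHom :=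
    SimplexCategory.epi_iff_surjective.mp hκ
  have hsm : StrictMono f.toOrderHom :=
    f.toOrderHom.monotone.strictMono_of_injective hfinj
  -- surjective monotone maps preserve endpoints
  have hη0 : η.toOrderHom 0 = 0 := by
    obtain ⟨x, hx⟩ := hηs 0
    exact le_antisymm (hx ▸ η.toOrderHom.monotone (Fin.zero_le x)) (Fin.zero_le _)
  have hηl : η.toOrderHom (Fin.last m) = Fin.last n := by
    obtain ⟨x, hx⟩ := hηs (Fin.last n)
    exact le_antisymm (Fin.le_last _) (hx ▸ η.toOrderHom.monotone (Fin.le_last x))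
  have hκ0 : κ.toOrderHom 0 = 0 := by
    obtain ⟨x, hx⟩ := hκs 0
    exact le_antisymm (hx ▸ κ.toOrderHom.monotone (Fin.zero_le x)) (Fin.zero_le _)
  have hκl : κ.toOrderHom (Fin.last k) = Fin.last l := by
    obtain ⟨x, hx⟩ := hκs (Fin.last l)
    exact le_antisymm (Fin.le_last _) (hx ▸ κ.toOrderHom.monotone (Fin.le_last x))
  have hcomm := hpo.w
  -- activity of g
  have hga : SimplexCategory.IsActive g := by
    constructor
    · have h0 : (f ≫ κ).toOrderHom 0 = (η ≫ g).toOrderHom 0 := by rw [hcomm]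
      simp only [SimplexCategory.comp_toOrderHom, OrderHom.comp_coe,
        Function.comp_apply] at h0
      rw [hf0, hκ0] at h0
      rw [← hη0, ← h0]
    · have h1 : (f ≫ κ).toOrderHom (Fin.last m) = (η ≫ g).toOrderHom (Fin.last m) := by
        rw [hcomm]
      simp only [SimplexCategory.comp_toOrderHom, OrderHom.comp_coe,
        Function.comp_apply] at h1
      rw [hfl, hκl] at h1
      rw [← hηl, ← h1]
  refine ⟨?_, hga⟩
  -- construct a retraction of f
  have hS : ∀ j : Fin (k + 1),
      (Finset.univ.filter (fun i : Fin (m + 1) => f.toOrderHom i ≤ j)).Nonempty := by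
    intro j
    refine ⟨0, ?_⟩
    simp only [Finset.mem_filter, Finset.mem_univ, true_and]
    rw [hf0]
    exact Fin.zero_le j
  let rfun : Fin (k + 1) → Fin (m + 1) := fun j =>
    (Finset.univ.filter (fun i : Fin (m + 1) => f.toOrderHom i ≤ j)).max' (hS j)
  have hrmono : Monotone rfun := by
    intro a b hab
    apply Finset.max'_subset
    intro i hi
    simp only [Finset.mem_filter, Finset.mem_univ, true_and] at hi ⊢
    exact hi.trans hab
  let r : SimplexCategory.mk k ⟶ SimplexCategory.mk m :=
    SimplexCategory.Hom.mk ⟨rfun, hrmono⟩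
  have hret : f ≫ r = 𝟙 (SimplexCategory.mk m) := by
    apply SimplexCategory.Hom.ext
    apply OrderHom.ext
    funext i
    show rfun (f.toOrderHom i) = i
    apply le_antisymm
    · apply Finset.max'_le
      intro y hy
      simp only [Finset.mem_filter, Finset.mem_univ, true_and] at hy
      exact hsm.le_iff_le.mp hy
    · apply Finset.le_max'
      simp
  -- use the pushout to get a retraction of g
  have w : f ≫ (r ≫ η) = η ≫ 𝟙 (SimplexCategory.mk n) := by
    rw [← Category.assoc, hret, Category.id_comp, Category.comp_id]
  have : IsSplitMono g := IsSplitMono.mk' ⟨hpo.desc (r ≫ η) (𝟙 _) w, hpo.inr_desc _ _ _⟩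
  exact IsSplitMono.mono g
end
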